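/- arXiv:0803.2371 — 8 statements merged into one kernel-verified Lean document; each statement's English description precedes it below -/
import Mathlib

section
/- Let Z, N, A be n×n real matrices and let I denote the n×n identity matrix. Then rank(A − Z·A·N) ≤ rank(Zᵀ·A − A·N) + rank(I − Z·Zᵀ). (In displacement notation: δ^∇_{Z,N}{A} ≤ δ^Δ_{Zᵀ,N}{A} + δ^∇_{Z,Zᵀ}{I}.) -/
open Matrix

theorem Matrix.rank_add_le {m n K : Type*} [Finite m] [Fintype n] [Field K]
    (A B : Matrix m n K) : (A + B).rank ≤ A.rank + B.rank := by
  have h_range : LinearMap.range (A + B).mulVecLin ≤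
      LinearMap.range A.mulVecLin ⊔ LinearMap.range B.mulVecLin := by
    rw [Matrix.mulVecLin_add]
    exact LinearMap.range_add_le _ _
  exact (Submodule.finrank_mono h_range).trans (Submodule.finrank_add_le_finrank_add_finrank _ _)

theorem Matrix.rank_sub_mul_mul_le {m n K : Type*} [Fintype m] [Fintype n] [DecidableEq m]
    [Field K] (Z Y : Matrix m m K) (A : Matrix m n K) (N : Matrix n n K) :
    (A - Z * A * N).rank ≤ (Y * A - A * N).rank + (1 - Z * Y).rank := by
  have h_split : A - Z * A * N = Z * (Y * A - A * N) + (1 - Z * Y) * A := by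
    simp only [Matrix.mul_sub, Matrix.sub_mul, Matrix.one_mul, Matrix.mul_assoc]
    abel
  rw [h_split]
  exact (rank_add_le _ _).trans (add_le_add (rank_mul_le_right _ _) (rank_mul_le_left _ _))

theorem displacement_nabla_le_delta (n : ℕ) (Z N A : Matrix (Fin n) (Fin n) ℝ) :
    (A - Z * A * N).rank ≤ (Zᵀ * A - A * N).rank + ((1 : Matrix (Fin n) (Fin n) ℝ) - Z * Zᵀ).rank :=
  rank_sub_mul_mul_le Z Zᵀ A N
end

section
/- Let A be an invertible n×n real matrix and let Z, N be n×n real matrices. Then rank(Z·A − A·N) = rank(N·A⁻¹ − A⁻¹·Z). That is, A and A⁻¹ have the same Δ-displacement rank with respect to dual displacement patterns: δ^Δ_{Z,N}{A} = δ^Δ_{N,Z}{A⁻¹}. -/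
open Matrix

namespace Matrix

variable {n R : Type*} [Fintype n] [DecidableEq n] [CommRing R]

lemma rank_neg (M : Matrix n n R) : (-M).rank = M.rank := by
  have hdet : IsUnit (-1 : Matrix n n R).det := by
    rw [det_neg, det_one, mul_one]
    exact isUnit_one.neg.pow _
  rw [← rank_mul_eq_right_of_isUnit_det _ M hdet, neg_one_mul]

lemma rank_mul_mul_of_isUnit_det (P M Q : Matrix n n R) (hP : IsUnit P.det)
    (hQ : IsUnit Q.det) : (P * M * Q).rank = M.rank := by
  rw [rank_mul_eq_left_of_isUnit_det Q _ hQ, rank_mul_eq_right_of_isUnit_det P M hP]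

lemma mul_inv_sub_inv_mul_eq_neg (A Z N : Matrix n n R) (hA : IsUnit A.det) :
    N * A⁻¹ - A⁻¹ * Z = -(A⁻¹ * (Z * A - A * N) * A⁻¹) := by
  rw [Matrix.mul_sub, Matrix.sub_mul, ← Matrix.mul_assoc A⁻¹ Z A,
    mul_nonsing_inv_cancel_right _ _ hA, nonsing_inv_mul_cancel_left _ _ hA, neg_sub]

end Matrix

theorem delta_displacement_rank_inverse (n : ℕ) (A Z N : Matrix (Fin n) (Fin n) ℝ)
    (hA : IsUnit A.det) :
    (Z * A - A * N).rank = (N * A⁻¹ - A⁻¹ * Z).rank := by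
  have hA' : IsUnit A⁻¹.det := isUnit_nonsing_inv_det A hA
  rw [mul_inv_sub_inv_mul_eq_neg A Z N hA, rank_neg, rank_mul_mul_of_isUnit_det _ _ _ hA' hA']
end

section
/- Let A be an invertible n×n real matrix and let Z, N be n×n real matrices. Then rank(A − Z·A·N) = rank(A⁻¹ − N·A⁻¹·Z). That is, A and A⁻¹ have the same ∇-displacement rank with respect to dual displacement patterns: δ^∇_{Z,N}{A} = δ^∇_{N,Z}{A⁻¹}. -/
/-!
Write `A - Z A N = (1 - Z P) A` and `A⁻¹ - N A⁻¹ Z = A⁻¹ (1 - P Z)` with `P = A N A⁻¹`. Invertible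
factors do not change the rank, and `1 - Z P`, `1 - P Z` have the same rank because
`v ↦ P v` and `w ↦ Z w` are mutually inverse isomorphisms between their kernels.
-/

open Matrix

namespace LinearMap

variable {K V W : Type*} [Semiring K] [AddCommGroup V] [Module K V] [AddCommGroup W] [Module K W]

theorem mem_ker_id_sub_comp_iff (f : V →ₗ[K] W) (g : W →ₗ[K] V) (v : V) :
    v ∈ ker (id - g ∘ₗ f) ↔ g (f v) = v := by
  rw [mem_ker, sub_apply, sub_eq_zero, eq_comm]
  rfl

def kerIdSubCompEquiv (f : V →ₗ[K] W) (g : W →ₗ[K] V) :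
    ker (id - g ∘ₗ f) ≃ₗ[K] ker (id - f ∘ₗ g) where
  toFun v := ⟨f v, by
    rw [mem_ker_id_sub_comp_iff, (mem_ker_id_sub_comp_iff f g v).mp v.2]⟩
  invFun w := ⟨g w, by
    rw [mem_ker_id_sub_comp_iff, (mem_ker_id_sub_comp_iff g f w).mp w.2]⟩
  map_add' _ _ := by ext; simp
  map_smul' _ _ := by ext; simp
  left_inv v := Subtype.ext ((mem_ker_id_sub_comp_iff f g v).mp v.2)
  right_inv w := Subtype.ext ((mem_ker_id_sub_comp_iff g f w).mp w.2)

end LinearMap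

namespace Matrix

variable {K n : Type*} [Fintype n] [DecidableEq n]

theorem mulVecLin_one_sub_mul [CommRing K] (P Q : Matrix n n K) :
    (1 - P * Q).mulVecLin = LinearMap.id - P.mulVecLin ∘ₗ Q.mulVecLin := by
  ext v : 1
  simp

theorem rank_one_sub_mul_comm [Field K] (P Q : Matrix n n K) :
    (1 - P * Q).rank = (1 - Q * P).rank := by
  have hker := (LinearMap.kerIdSubCompEquiv Q.mulVecLin P.mulVecLin).finrank_eq
  have hPQ := (1 - P * Q).mulVecLin.finrank_range_add_finrank_ker
  have hQP := (1 - Q * P).mulVecLin.finrank_range_add_finrank_ker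
  rw [mulVecLin_one_sub_mul] at hPQ hQP
  rw [rank, rank, mulVecLin_one_sub_mul, mulVecLin_one_sub_mul]
  omega

end Matrix

theorem nabla_displacement_rank_inverse (n : ℕ) (A Z N : Matrix (Fin n) (Fin n) ℝ)
    (hA : IsUnit A.det) :
    (A - Z * A * N).rank = (A⁻¹ - N * A⁻¹ * Z).rank := by
  have hleft : A - Z * A * N = (1 - Z * (A * N * A⁻¹)) * A := by
    simp only [sub_mul, Matrix.one_mul, Matrix.mul_assoc, nonsing_inv_mul A hA, Matrix.mul_one]
  have hright : A⁻¹ - N * A⁻¹ * Z = A⁻¹ * (1 - (A * N * A⁻¹) * Z) := by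
    simp only [mul_sub, Matrix.mul_one, ← Matrix.mul_assoc, nonsing_inv_mul A hA, Matrix.one_mul]
  rw [hleft, hright, rank_mul_eq_left_of_isUnit_det A _ hA,
    rank_mul_eq_right_of_isUnit_det A⁻¹ _ (isUnit_nonsing_inv_det A hA)]
  exact rank_one_sub_mul_comm Z (A * N * A⁻¹)
end

section
/- Let V and W be finite-dimensional vector spaces over a field K, let f : V → W and g : W → V be linear maps, and let λ be a nonzero scalar in K. Then the λ-eigenspace of the composition f∘g : W → W and the λ-eigenspace of the composition g∘f : V → V have the same dimension. In particular, every nonzero eigenvalue of f∘g is also an eigenvalue of g∘f. -/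
/-!
If `f (g x) = λ x` then `g (f (g x)) = λ g x`, so `g` maps the `λ`-eigenspace of `f ∘ g` into
that of `g ∘ f`, injectively when `λ ≠ 0` because `x` is recovered as `λ⁻¹ f (g x)`. By symmetry
the two eigenspaces have the same dimension.
-/

namespace Module.End

variable {R M N : Type*} [CommRing R] [AddCommGroup M] [Module R M] [AddCommGroup N] [Module R N]

theorem apply_mem_eigenspace_comp {f : M →ₗ[R] N} {g : N →ₗ[R] M} {μ : R} {x : N}
    (hx : x ∈ eigenspace (f ∘ₗ g) μ) : g x ∈ eigenspace (g ∘ₗ f) μ := by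
  rw [mem_eigenspace_iff, LinearMap.comp_apply] at hx ⊢
  rw [hx, map_smul]

theorem injOn_eigenspace_comp (f : M →ₗ[R] N) (g : N →ₗ[R] M) {μ : R}
    (hμ : IsSMulRegular N μ) : Set.InjOn g (eigenspace (f ∘ₗ g) μ) := by
  intro x hx y hy hxy
  rw [SetLike.mem_coe, mem_eigenspace_iff, LinearMap.comp_apply] at hx hy
  exact hμ (show μ • x = μ • y by rw [← hx, ← hy, hxy])

theorem finrank_eigenspace_comp_le [StrongRankCondition R] (f : M →ₗ[R] N) (g : N →ₗ[R] M)
    {μ : R} [Module.Finite R (eigenspace (g ∘ₗ f) μ)] (hμ : IsSMulRegular N μ) :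
    finrank R (eigenspace (f ∘ₗ g) μ) ≤ finrank R (eigenspace (g ∘ₗ f) μ) :=
  LinearMap.finrank_le_finrank_of_injective (f := g.restrict fun _ ↦ apply_mem_eigenspace_comp)
    fun x y hxy ↦ Subtype.ext <| injOn_eigenspace_comp f g hμ x.2 y.2 (congrArg Subtype.val hxy)

end Module.End

theorem eigenspace_comp_dim_eq {K : Type*} [Field K]
    {V W : Type*} [AddCommGroup V] [Module K V] [AddCommGroup W] [Module K W]
    [FiniteDimensional K V] [FiniteDimensional K W]
    (f : V →ₗ[K] W) (g : W →ₗ[K] V) (lam : K) (hlam : lam ≠ 0) :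
    Module.finrank K (Module.End.eigenspace (f ∘ₗ g) lam) =
      Module.finrank K (Module.End.eigenspace (g ∘ₗ f) lam) ∧
    (Module.End.HasEigenvalue (f ∘ₗ g) lam → Module.End.HasEigenvalue (g ∘ₗ f) lam) := by
  have hdim := le_antisymm (Module.End.finrank_eigenspace_comp_le f g (.of_ne_zero hlam))
    (Module.End.finrank_eigenspace_comp_le g f (.of_ne_zero hlam))
  refine ⟨hdim, fun hfg ↦ ?_⟩
  rw [Module.End.hasEigenvalue_iff, ← Submodule.one_le_finrank_iff] at hfg ⊢
  exact hdim ▸ hfg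
end

section
/- Let M be the 2×2 block real matrix M = [[A, B], [C, D]], where A is n₁×n₁, D is n₂×n₂, B is n₁×n₂ and C is n₂×n₁. Assume both M and A are invertible, and let Ā = D − C·A⁻¹·B be the Schur complement of A in M. Let Z₁, N₁ be n₁×n₁ real matrices and Z₂, N₂ be n₂×n₂ real matrices, and set Z = Z₁ ⊕ Z₂ and N = N₁ ⊕ N₂ (block-diagonal matrices). Then rank(Z₂·Ā − Ā·N₂) ≤ rank(Z·M − M·N), i.e. δ^Δ_{Z₂,N₂}{Ā} ≤ δ^Δ_{Z,N}{M}. -/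
/-! Block elimination with `X = [-C A⁻¹, 1]` and `Y = [-A⁻¹ B; 1]` gives `X M = [0, Ā]` and
`M Y = [0; Ā]`. Since the identity blocks of `X` and `Y` sit in the second block position, the
block-diagonal `Z` and `N` act on these products through `Z₂` and `N₂` only, so
`X (Z M - M N) Y = Z₂ Ā - Ā N₂`, and multiplying by `X` and `Y` cannot increase the rank. -/

open Matrix

namespace Matrix

section Semiring

variable {l m n R : Type*} [Fintype m] [Fintype n] [DecidableEq n] [Semiring R]

theorem fromCols_one_mul_fromBlocks_diag_mul_fromRows_zero (P : Matrix n m R)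
    (Z₁ : Matrix m m R) (Z₂ : Matrix n n R) (S : Matrix n l R) :
    fromCols P (1 : Matrix n n R) * fromBlocks Z₁ 0 0 Z₂ * fromRows (0 : Matrix m l R) S
      = Z₂ * S := by
  simp [fromCols_mul_fromBlocks, fromCols_mul_fromRows]

theorem fromCols_zero_mul_fromBlocks_diag_mul_fromRows_one (S : Matrix l n R)
    (N₁ : Matrix m m R) (N₂ : Matrix n n R) (Q : Matrix m n R) :
    fromCols (0 : Matrix l m R) S * fromBlocks N₁ 0 0 N₂ * fromRows Q (1 : Matrix n n R)
      = S * N₂ := by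
  simp [fromCols_mul_fromBlocks, fromCols_mul_fromRows]

end Semiring

section CommRing

variable {m n R : Type*} [Fintype m] [DecidableEq m] [Fintype n] [DecidableEq n] [CommRing R]

theorem fromCols_neg_mul_inv_one_mul_fromBlocks {A : Matrix m m R} (B : Matrix m n R)
    (C : Matrix n m R) (D : Matrix n n R) (hA : IsUnit A.det) :
    fromCols (-(C * A⁻¹)) (1 : Matrix n n R) * fromBlocks A B C D
      = fromCols 0 (D - C * A⁻¹ * B) := by
  rw [fromCols_mul_fromBlocks, Matrix.neg_mul, Matrix.mul_assoc, nonsing_inv_mul A hA]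
  simp [neg_add_eq_sub]

theorem fromBlocks_mul_fromRows_neg_inv_mul_one {A : Matrix m m R} (B : Matrix m n R)
    (C : Matrix n m R) (D : Matrix n n R) (hA : IsUnit A.det) :
    fromBlocks A B C D * fromRows (-(A⁻¹ * B)) (1 : Matrix n n R)
      = fromRows 0 (D - C * A⁻¹ * B) := by
  rw [fromBlocks_mul_fromRows, Matrix.mul_neg, Matrix.mul_neg, ← Matrix.mul_assoc,
    mul_nonsing_inv A hA]
  simp [neg_add_eq_sub, Matrix.mul_assoc]

theorem fromCols_mul_displacement_fromBlocks_mul_fromRows {A : Matrix m m R}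
    (B : Matrix m n R) (C : Matrix n m R) (D : Matrix n n R) (hA : IsUnit A.det)
    (Z₁ N₁ : Matrix m m R) (Z₂ N₂ : Matrix n n R) :
    fromCols (-(C * A⁻¹)) (1 : Matrix n n R)
        * (fromBlocks Z₁ 0 0 Z₂ * fromBlocks A B C D - fromBlocks A B C D * fromBlocks N₁ 0 0 N₂)
        * fromRows (-(A⁻¹ * B)) (1 : Matrix n n R)
      = Z₂ * (D - C * A⁻¹ * B) - (D - C * A⁻¹ * B) * N₂ := by
  rw [Matrix.mul_sub (fromCols _ _), Matrix.sub_mul _ _ (fromRows _ _)]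
  congr 1
  · rw [Matrix.mul_assoc _ _ (fromRows _ _), Matrix.mul_assoc _ (fromBlocks A B C D),
      fromBlocks_mul_fromRows_neg_inv_mul_one B C D hA, ← Matrix.mul_assoc,
      fromCols_one_mul_fromBlocks_diag_mul_fromRows_zero]
  · rw [← Matrix.mul_assoc, fromCols_neg_mul_inv_one_mul_fromBlocks B C D hA,
      fromCols_zero_mul_fromBlocks_diag_mul_fromRows_one]

end CommRing

end Matrix

theorem schur_complement_delta_displacement_general (n₁ n₂ : ℕ)
    (A : Matrix (Fin n₁) (Fin n₁) ℝ) (B : Matrix (Fin n₁) (Fin n₂) ℝ)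
    (C : Matrix (Fin n₂) (Fin n₁) ℝ) (D : Matrix (Fin n₂) (Fin n₂) ℝ)
    (Z₁ N₁ : Matrix (Fin n₁) (Fin n₁) ℝ) (Z₂ N₂ : Matrix (Fin n₂) (Fin n₂) ℝ)
    (hA : IsUnit A.det) :
    (Z₂ * (D - C * A⁻¹ * B) - (D - C * A⁻¹ * B) * N₂).rank
      ≤ (Matrix.fromBlocks Z₁ 0 0 Z₂ * Matrix.fromBlocks A B C D
          - Matrix.fromBlocks A B C D * Matrix.fromBlocks N₁ 0 0 N₂).rank := by
  rw [← fromCols_mul_displacement_fromBlocks_mul_fromRows B C D hA Z₁ N₁ Z₂ N₂]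
  exact (rank_mul_le_left _ _).trans (rank_mul_le_right _ _)

theorem schur_complement_delta_displacement (n₁ n₂ : ℕ)
    (A : Matrix (Fin n₁) (Fin n₁) ℝ) (B : Matrix (Fin n₁) (Fin n₂) ℝ)
    (C : Matrix (Fin n₂) (Fin n₁) ℝ) (D : Matrix (Fin n₂) (Fin n₂) ℝ)
    (Z₁ N₁ : Matrix (Fin n₁) (Fin n₁) ℝ) (Z₂ N₂ : Matrix (Fin n₂) (Fin n₂) ℝ)
    (hM : IsUnit (Matrix.fromBlocks A B C D).det) (hA : IsUnit A.det) :
    (Z₂ * (D - C * A⁻¹ * B) - (D - C * A⁻¹ * B) * N₂).rank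
      ≤ (Matrix.fromBlocks Z₁ 0 0 Z₂ * Matrix.fromBlocks A B C D
          - Matrix.fromBlocks A B C D * Matrix.fromBlocks N₁ 0 0 N₂).rank :=
  schur_complement_delta_displacement_general n₁ n₂ A B C D Z₁ N₁ Z₂ N₂ hA
end

section
/- Let A₁ be a real n₁×n₂ matrix and A₂ a real n₂×n₁ matrix with n₁ ≤ n₂, both of full rank (rank A₁ = rank A₂ = n₁). Let Z₁, Z₂ be n₁×n₁ real matrices and N₁, N₂ be n₂×n₂ real matrices. Then rank(A₁·A₂ − Z₁·A₁·A₂·Z₂) ≤ rank(A₁ − Z₁·A₁·N₁) + rank(I_{n₂} − N₁·N₂) + rank(A₂ − N₂·A₂·Z₂), where I_{n₂} is the n₂×n₂ identity matrix. In displacement notation: δ^∇_{Z₁,Z₂}{A₁A₂} ≤ δ^∇_{Z₁,N₁}{A₁} + δ^∇_{N₁,N₂}{I_{n₂}} + δ^∇_{N₂,Z₂}{A₂}. -/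
/-!
Write `∇_{Z,N} A = A - Z * A * N`. Inserting `N₁ * N₂ = 1 - ∇_{N₁,N₂} 1` between the two
factors gives
`∇_{Z₁,Z₂}(A₁ A₂) = ∇_{Z₁,N₁}A₁ * A₂ - Z₁ A₁ * ∇_{N₁,N₂}1 * A₂ Z₂ + Z₁ A₁ N₁ * ∇_{N₂,Z₂}A₂`,
and rank is subadditive and bounded by the rank of any factor of a product.
-/

open Matrix

namespace Matrix

theorem rank_neg_s8 {m n R : Type*} [Fintype n] [CommRing R] (A : Matrix m n R) :
    (-A).rank = A.rank := by
  rw [rank, rank, show (-A).mulVecLin = -A.mulVecLin from LinearMap.ext fun _ => neg_mulVec _ _,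
    LinearMap.range_neg]

variable {m n K : Type*} [Fintype n] [Field K]

theorem rank_add_le_s8 (A B : Matrix m n K) : (A + B).rank ≤ A.rank + B.rank :=
  calc (A + B).rank
      ≤ Module.finrank K ↥(LinearMap.range A.mulVecLin ⊔ LinearMap.range B.mulVecLin) :=
        Submodule.finrank_mono (by rw [mulVecLin_add]; exact LinearMap.range_add_le _ _)
    _ ≤ A.rank + B.rank := Submodule.finrank_add_le_finrank_add_finrank _ _

theorem rank_sub_le (A B : Matrix m n K) : (A - B).rank ≤ A.rank + B.rank := by
  simpa only [sub_eq_add_neg, rank_neg_s8] using rank_add_le_s8 A (-B)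

end Matrix

section Displacement

variable {l m n α : Type*} [Fintype l] [Fintype m] [Fintype n]

def nablaDisplacement [Ring α] (Z : Matrix m m α) (N : Matrix n n α) (A : Matrix m n α) :
    Matrix m n α :=
  A - Z * A * N

theorem nablaDisplacement_mul [Ring α] [DecidableEq l] (A₁ : Matrix m l α)
    (A₂ : Matrix l n α) (Z₁ : Matrix m m α) (Z₂ : Matrix n n α) (N₁ N₂ : Matrix l l α) :
    nablaDisplacement Z₁ Z₂ (A₁ * A₂) =
      nablaDisplacement Z₁ N₁ A₁ * A₂ - Z₁ * A₁ * nablaDisplacement N₁ N₂ 1 * A₂ * Z₂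
        + Z₁ * A₁ * N₁ * nablaDisplacement N₂ Z₂ A₂ := by
  simp only [nablaDisplacement, Matrix.sub_mul, Matrix.mul_sub, Matrix.mul_one,
    Matrix.mul_assoc]
  abel

theorem rank_nablaDisplacement_mul_le [Field α] [DecidableEq l] (A₁ : Matrix m l α)
    (A₂ : Matrix l n α) (Z₁ : Matrix m m α) (Z₂ : Matrix n n α) (N₁ N₂ : Matrix l l α) :
    (nablaDisplacement Z₁ Z₂ (A₁ * A₂)).rank ≤
      (nablaDisplacement Z₁ N₁ A₁).rank + (nablaDisplacement N₁ N₂ 1).rank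
        + (nablaDisplacement N₂ Z₂ A₂).rank := by
  rw [nablaDisplacement_mul A₁ A₂ Z₁ Z₂ N₁ N₂]
  refine (rank_add_le_s8 _ _).trans (add_le_add ((rank_sub_le _ _).trans (add_le_add ?_ ?_)) ?_)
  · exact rank_mul_le_left _ _
  · exact ((rank_mul_le_left _ _).trans (rank_mul_le_left _ _)).trans
      (rank_mul_le_right _ _)
  · exact rank_mul_le_right _ _

end Displacement

theorem product_nabla_displacement_general (n₁ n₂ : ℕ)
    (A₁ : Matrix (Fin n₁) (Fin n₂) ℝ) (A₂ : Matrix (Fin n₂) (Fin n₁) ℝ)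
    (Z₁ Z₂ : Matrix (Fin n₁) (Fin n₁) ℝ) (N₁ N₂ : Matrix (Fin n₂) (Fin n₂) ℝ) :
    (A₁ * A₂ - Z₁ * (A₁ * A₂) * Z₂).rank
      ≤ (A₁ - Z₁ * A₁ * N₁).rank + ((1 : Matrix (Fin n₂) (Fin n₂) ℝ) - N₁ * N₂).rank
          + (A₂ - N₂ * A₂ * Z₂).rank := by
  simpa only [nablaDisplacement, Matrix.mul_one] using
    rank_nablaDisplacement_mul_le A₁ A₂ Z₁ Z₂ N₁ N₂

theorem product_nabla_displacement (n₁ n₂ : ℕ) (hn : n₁ ≤ n₂)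
    (A₁ : Matrix (Fin n₁) (Fin n₂) ℝ) (A₂ : Matrix (Fin n₂) (Fin n₁) ℝ)
    (hA₁ : A₁.rank = n₁) (hA₂ : A₂.rank = n₁)
    (Z₁ Z₂ : Matrix (Fin n₁) (Fin n₁) ℝ) (N₁ N₂ : Matrix (Fin n₂) (Fin n₂) ℝ) :
    (A₁ * A₂ - Z₁ * (A₁ * A₂) * Z₂).rank
      ≤ (A₁ - Z₁ * A₁ * N₁).rank + ((1 : Matrix (Fin n₂) (Fin n₂) ℝ) - N₁ * N₂).rank
          + (A₂ - N₂ * A₂ * Z₂).rank :=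
  product_nabla_displacement_general n₁ n₂ A₁ A₂ Z₁ Z₂ N₁ N₂
end

section
/- Let A be a real m×n matrix and B a real n×p matrix, and let Z_A be m×m, N_A and Z_B be n×n, and N_B be p×p real matrices. Then rank(Z_A·A·B − A·B·N_B) ≤ rank(Z_A·A − A·N_A) + rank(N_A − Z_B) + rank(Z_B·B − B·N_B). In displacement notation: δ^Δ_{Z_A,N_B}{AB} ≤ δ^Δ_{Z_A,N_A}{A} + δ^Δ_{N_A,Z_B}{I_n} + δ^Δ_{Z_B,N_B}{B}. -/
/-!
Writing `Δ_{Z,N} X = Z X - X N`, the product rule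
`Δ_{Z_A,N_B}(AB) = Δ_{Z_A,N_A}(A) B + A (N_A - Z_B) B + A Δ_{Z_B,N_B}(B)` holds for arbitrary
`N_A`, `Z_B` (the middle terms telescope). Subadditivity of rank and `rank (X Y) ≤ rank X, rank Y`
then bound the three summands separately.
-/

namespace Matrix

variable {K : Type*} [Field K] {l m n o : Type*}

theorem rank_add_le_s9 [Fintype n] (X Y : Matrix m n K) : (X + Y).rank ≤ X.rank + Y.rank := by
  unfold rank
  rw [mulVecLin_add]
  exact (Submodule.finrank_mono (LinearMap.range_add_le _ _)).trans
    (Submodule.finrank_add_le_finrank_add_finrank _ _)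

theorem rank_mul_mul_le_middle [Fintype m] [Fintype n] [Fintype o]
    (A : Matrix l m K) (C : Matrix m n K) (B : Matrix n o K) :
    (A * C * B).rank ≤ C.rank :=
  (rank_mul_le_left _ _).trans (rank_mul_le_right _ _)

def displacement [Fintype l] [Fintype m] (Z : Matrix l l K) (N : Matrix m m K)
    (X : Matrix l m K) : Matrix l m K :=
  Z * X - X * N

section Product

variable [Fintype l] [Fintype m] [Fintype n]

theorem displacement_mul (ZA : Matrix l l K) (NA ZB : Matrix m m K) (NB : Matrix n n K)
    (A : Matrix l m K) (B : Matrix m n K) :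
    displacement ZA NB (A * B) =
      displacement ZA NA A * B + A * (NA - ZB) * B + A * displacement ZB NB B := by
  simp only [displacement, Matrix.sub_mul, Matrix.mul_sub, Matrix.mul_assoc]
  abel

theorem rank_displacement_mul_le (ZA : Matrix l l K) (NA ZB : Matrix m m K) (NB : Matrix n n K)
    (A : Matrix l m K) (B : Matrix m n K) :
    (displacement ZA NB (A * B)).rank ≤
      (displacement ZA NA A).rank + (NA - ZB).rank + (displacement ZB NB B).rank := by
  rw [displacement_mul ZA NA ZB NB]
  refine (rank_add_le_s9 _ _).trans (add_le_add ((rank_add_le_s9 _ _).trans (add_le_add ?_ ?_)) ?_)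
  · exact rank_mul_le_left _ _
  · exact rank_mul_mul_le_middle _ _ _
  · exact rank_mul_le_right _ _

end Product

end Matrix

theorem product_delta_displacement (m n p : ℕ)
    (A : Matrix (Fin m) (Fin n) ℝ) (B : Matrix (Fin n) (Fin p) ℝ)
    (ZA : Matrix (Fin m) (Fin m) ℝ) (NA ZB : Matrix (Fin n) (Fin n) ℝ)
    (NB : Matrix (Fin p) (Fin p) ℝ) :
    (ZA * (A * B) - (A * B) * NB).rank
      ≤ (ZA * A - A * NA).rank + (NA - ZB).rank + (ZB * B - B * NB).rank :=
  Matrix.rank_displacement_mul_le ZA NA ZB NB A B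
end

section
/- Let P be an n×n real orthogonal matrix and let A be an n×n real matrix that is P-symmetric, i.e. P·A·Pᵀ = Aᵀ. Let A⁻ be the Moore–Penrose pseudo-inverse of A, i.e. an n×n real matrix satisfying A·A⁻·A = A, A⁻·A·A⁻ = A⁻, (A·A⁻)ᵀ = A·A⁻ and (A⁻·A)ᵀ = A⁻·A. Then A⁻ is also P-symmetric: P·A⁻·Pᵀ = (A⁻)ᵀ. -/
open Matrix

/-!
Bᵀ is a Moore–Penrose inverse of Aᵀ, and P B Pᵀ is one of P A Pᵀ = Aᵀ since conjugation by an
orthogonal matrix preserves all four Penrose conditions; by uniqueness P B Pᵀ = Bᵀ.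
-/

namespace Matrix

variable {m n R : Type*} [Fintype m] [CommRing R]

theorem IsSymm.mul_mul_transpose {A : Matrix m m R} (hA : A.IsSymm) (U : Matrix n m R) :
    (U * A * Uᵀ).IsSymm := by
  rw [IsSymm, transpose_mul, transpose_mul, transpose_transpose, hA.eq, Matrix.mul_assoc]

variable [Fintype n]

structure IsMoorePenroseInverse (A : Matrix m n R) (B : Matrix n m R) : Prop where
  mul_inv_mul : A * B * A = A
  inv_mul_inv : B * A * B = B
  isSymm_mul_inv : (A * B).IsSymm
  isSymm_inv_mul : (B * A).IsSymm

namespace IsMoorePenroseInverse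

variable {A : Matrix m n R} {B X Y : Matrix n m R}

theorem transpose (hB : IsMoorePenroseInverse A B) : IsMoorePenroseInverse Aᵀ Bᵀ where
  mul_inv_mul := by
    rw [← transpose_mul, ← transpose_mul, ← Matrix.mul_assoc, hB.mul_inv_mul]
  inv_mul_inv := by
    rw [← transpose_mul, ← transpose_mul, ← Matrix.mul_assoc, hB.inv_mul_inv]
  isSymm_mul_inv := by simpa only [transpose_mul] using hB.isSymm_inv_mul.transpose
  isSymm_inv_mul := by simpa only [transpose_mul] using hB.isSymm_mul_inv.transpose

theorem mul_mul_eq_left (hX : IsMoorePenroseInverse A X) (hY : IsMoorePenroseInverse A Y) :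
    X * A * Y = X := by
  have hAX := hX.isSymm_mul_inv.eq
  have hAY := hY.isSymm_mul_inv.eq
  symm
  calc X = X * (A * X)ᵀ := by rw [hAX, ← Matrix.mul_assoc, hX.inv_mul_inv]
    _ = X * (A * Y * A * X)ᵀ := by rw [hY.mul_inv_mul]
    _ = X * ((A * X)ᵀ * (A * Y)ᵀ) := by simp only [transpose_mul, Matrix.mul_assoc]
    _ = X * A * X * (A * Y) := by rw [hAX, hAY]; simp only [Matrix.mul_assoc]
    _ = X * A * Y := by rw [hX.inv_mul_inv, Matrix.mul_assoc]

theorem unique (hX : IsMoorePenroseInverse A X) (hY : IsMoorePenroseInverse A Y) : X = Y := by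
  -- `mul_mul_eq_left` for `Aᵀ`, transposed back, gives `X * A * Y = Y`.
  have hYX := congrArg Matrix.transpose (hY.transpose.mul_mul_eq_left hX.transpose)
  simp only [transpose_mul, transpose_transpose, ← Matrix.mul_assoc] at hYX
  rw [← hX.mul_mul_eq_left hY, hYX]

variable [DecidableEq m] [DecidableEq n]

theorem conj_orthogonal (hB : IsMoorePenroseInverse A B) {U : Matrix m m R} {V : Matrix n n R}
    (hU : Uᵀ * U = 1) (hV : V * Vᵀ = 1) :
    IsMoorePenroseInverse (U * A * V) (Vᵀ * B * Uᵀ) := by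
  have mul_conj : U * A * V * (Vᵀ * B * Uᵀ) = U * (A * B) * Uᵀ := by
    simp only [Matrix.mul_assoc]
    rw [← Matrix.mul_assoc V, hV, Matrix.one_mul]
  have conj_mul : Vᵀ * B * Uᵀ * (U * A * V) = Vᵀ * (B * A) * V := by
    simp only [Matrix.mul_assoc]
    rw [← Matrix.mul_assoc Uᵀ, hU, Matrix.one_mul]
  refine ⟨?_, ?_, ?_, ?_⟩
  · calc U * A * V * (Vᵀ * B * Uᵀ) * (U * A * V) = U * (A * B) * (Uᵀ * U) * A * V := by
          rw [mul_conj]; simp only [Matrix.mul_assoc]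
      _ = U * A * V := by rw [hU, Matrix.mul_one, Matrix.mul_assoc U, hB.mul_inv_mul]
  · calc Vᵀ * B * Uᵀ * (U * A * V) * (Vᵀ * B * Uᵀ) = Vᵀ * (B * A) * (V * Vᵀ) * B * Uᵀ := by
          rw [conj_mul]; simp only [Matrix.mul_assoc]
      _ = Vᵀ * B * Uᵀ := by rw [hV, Matrix.mul_one, Matrix.mul_assoc Vᵀ, hB.inv_mul_inv]
  · rw [mul_conj]
    exact hB.isSymm_mul_inv.mul_mul_transpose U
  · rw [conj_mul]
    simpa only [transpose_transpose] using hB.isSymm_inv_mul.mul_mul_transpose Vᵀ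

end IsMoorePenroseInverse

end Matrix

theorem P_symmetric_pseudoinverse (n : ℕ) (P A B : Matrix (Fin n) (Fin n) ℝ)
    (hP : P * Pᵀ = 1) (hsym : P * A * Pᵀ = Aᵀ)
    (h1 : A * B * A = A) (h2 : B * A * B = B)
    (h3 : (A * B)ᵀ = A * B) (h4 : (B * A)ᵀ = B * A) :
    P * B * Pᵀ = Bᵀ := by
  have hB : IsMoorePenroseInverse A B := ⟨h1, h2, h3, h4⟩
  have hP' : Pᵀ * P = 1 := mul_eq_one_comm.mp hP
  have hconj := hB.conj_orthogonal hP' (V := Pᵀ) (by rwa [transpose_transpose])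
  rw [hsym, transpose_transpose] at hconj
  exact hconj.unique hB.transpose
end
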